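/- arXiv:1409.8379 — 3 statements merged into one kernel-verified Lean document; each statement's English description precedes it below -/
import Mathlib

section
/- The double power nonlinearity satisfies the kink assumption: let 0 < α < β and define, for s ≥ 0, f(s) = s^{1+α} − s^{1+β} (this is the restriction to nonnegative reals of f(u) = |u|^α u − |u|^β u). Then there exist ω₀ > 0 and b > 0 such that, for h(s) := ω₀·s − f(s) = ω₀·s − s^{1+α} + s^{1+β}, one has: h(b) = 0, h'(b) > 0, and ∫₀^b h(s) ds = 0. -/
/-!
Writing `h(s) = s (ω₀ - s^α + s^β)`, the condition `h(b) = 0` forces `ω₀ = b^α - b^β`.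
With this choice `∫₀^b h = b² (b^α (1/2 - 1/(2+α)) - b^β (1/2 - 1/(2+β)))`, which vanishes
exactly when `b^(β-α) = c := α(2+β) / (β(2+α))`. Since `α < β` we have `c < 1`, so `ω₀ > 0`,
and `h'(b) = β b^β - α b^α = (β c - α) b^α > 0` because `β c = α (2+β)/(2+α) > α`.
-/

open Real intervalIntegral

section DoublePower

variable {α β ω b : ℝ}

theorem exists_pos_rpow_eq_mul_rpow {c : ℝ} (hc : 0 < c) (hαβ : α ≠ β) :
    ∃ b : ℝ, 0 < b ∧ b ^ β = c * b ^ α := by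
  set b := c ^ (β - α)⁻¹
  have hb : 0 < b := by positivity
  refine ⟨b, hb, ?_⟩
  calc b ^ β = b ^ (β - α) * b ^ α := by rw [← rpow_add hb, sub_add_cancel]
    _ = c * b ^ α := by rw [rpow_inv_rpow hc.le (sub_ne_zero.2 hαβ.symm)]

theorem rpow_one_add_of_pos (hb : 0 < b) (γ : ℝ) : b ^ (1 + γ) = b * b ^ γ := by
  rw [rpow_add hb, rpow_one]

theorem double_power_eq_mul (hb : 0 < b) :
    ω * b - b ^ (1 + α) + b ^ (1 + β) = b * (ω - b ^ α + b ^ β) := by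
  rw [rpow_one_add_of_pos hb, rpow_one_add_of_pos hb]
  ring

theorem deriv_double_power (hb : 0 < b) :
    deriv (fun s : ℝ => ω * s - s ^ (1 + α) + s ^ (1 + β)) b
      = ω - (1 + α) * b ^ α + (1 + β) * b ^ β := by
  have hder : HasDerivAt (fun s : ℝ => ω * s - s ^ (1 + α) + s ^ (1 + β))
      (ω * 1 - (1 + α) * b ^ (1 + α - 1) + (1 + β) * b ^ (1 + β - 1)) b :=
    (((hasDerivAt_id b).const_mul ω).sub (hasDerivAt_rpow_const (Or.inl hb.ne'))).add
      (hasDerivAt_rpow_const (Or.inl hb.ne'))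
  rw [hder.deriv, mul_one, add_sub_cancel_left, add_sub_cancel_left]

theorem integral_double_power (hb : 0 < b) (hα : -2 < α) (hβ : -2 < β) :
    ∫ s in (0 : ℝ)..b, (ω * s - s ^ (1 + α) + s ^ (1 + β))
      = b ^ 2 * (ω / 2 - b ^ α / (2 + α) + b ^ β / (2 + β)) := by
  have hα' : -1 < 1 + α := by linarith
  have hβ' : -1 < 1 + β := by linarith
  have hlin : IntervalIntegrable (fun s : ℝ => ω * s) MeasureTheory.volume 0 b :=
    intervalIntegrable_id.const_mul ω
  have hpow {γ : ℝ} (hγ : -1 < γ) :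
      IntervalIntegrable (fun s : ℝ => s ^ γ) MeasureTheory.volume 0 b :=
    intervalIntegrable_rpow' hγ
  have hshift (γ : ℝ) : b ^ (1 + γ + 1) = b ^ 2 * b ^ γ := by
    rw [show 1 + γ + 1 = 2 + γ by ring, rpow_add hb, rpow_two]
  rw [integral_add (hlin.sub (hpow hα')) (hpow hβ'), integral_sub hlin (hpow hα'),
    integral_const_mul, integral_id, integral_rpow (Or.inl hα'), integral_rpow (Or.inl hβ'),
    zero_rpow (by linarith), zero_rpow (by linarith), hshift, hshift]
  field_simp
  ring

end DoublePower

/-- The double power nonlinearity satisfies the kink assumption: for `0 < α < β` and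
`f(s) = s^{1+α} − s^{1+β}` (the restriction to nonnegative reals of
`f(u) = |u|^α u − |u|^β u`), there exist `ω₀ > 0` and `b > 0` such that
`h(s) := ω₀ s − f(s) = ω₀ s − s^{1+α} + s^{1+β}` satisfies `h(b) = 0`, `h'(b) > 0` and
`∫₀^b h(s) ds = 0`. -/
theorem double_power_satisfies_kink_assumption (α β : ℝ) (hα : 0 < α) (hαβ : α < β) :
    ∃ ω₀ : ℝ, 0 < ω₀ ∧ ∃ b : ℝ, 0 < b ∧
      (ω₀ * b - b ^ (1 + α) + b ^ (1 + β) = 0) ∧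
      (0 < deriv (fun s : ℝ => ω₀ * s - s ^ (1 + α) + s ^ (1 + β)) b) ∧
      (∫ s in (0:ℝ)..b, (ω₀ * s - s ^ (1 + α) + s ^ (1 + β))) = 0 := by
  have hβ : 0 < β := hα.trans hαβ
  set c := α * (2 + β) / (β * (2 + α))
  have hc : c * (β * (2 + α)) = α * (2 + β) := div_mul_cancel₀ _ (by positivity)
  have hc_lt_one : c < 1 := by
    rw [div_lt_one (by positivity)]
    linarith
  have hα_lt : α < β * c := by
    rw [mul_div_assoc', lt_div_iff₀ (by positivity)]
    nlinarith [mul_pos (mul_pos hα hβ) (sub_pos.2 hαβ)]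
  obtain ⟨b, hb, hbβ⟩ := exists_pos_rpow_eq_mul_rpow (c := c) (by positivity) hαβ.ne
  have hbα : 0 < b ^ α := by positivity
  refine ⟨b ^ α - b ^ β, ?_, b, hb, ?_, ?_, ?_⟩
  · rw [hbβ, ← one_sub_mul]
    exact mul_pos (sub_pos.2 hc_lt_one) hbα
  · rw [double_power_eq_mul hb]
    ring
  · rw [deriv_double_power hb, hbβ]
    nlinarith [mul_pos (sub_pos.2 hα_lt) hbα]
  · rw [integral_double_power hb (by linarith) (by linarith), hbβ]
    field_simp
    linear_combination -(b ^ 2 * b ^ α) * hc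
end

section
/- Existence of the kink profile: let ω₀ > 0 and let f : ℝ → ℝ be continuously differentiable with f(0) = 0 and f'(0) = 0; set h(s) := ω₀·s − f(s) and H(s) := ∫₀^s h(r) dr. Assume there is b > 0 such that h(b) = 0, h'(b) > 0, H(b) = 0, and H(s) > 0 for all s ∈ (0, b). Then there exists a twice continuously differentiable function φ_K : ℝ → ℝ such that: (i) −φ_K''(x) + ω₀·φ_K(x) − f(φ_K(x)) = 0 for all x ∈ ℝ; (ii) 0 < φ_K(x) < b for all x and φ_K is strictly decreasing; (iii) φ_K(x) → b as x → −∞ and φ_K(x) → 0 as x → +∞. -/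
open Filter Set Topology intervalIntegral

/-!
Energy method. Multiplying `-φ'' + h(φ) = 0` by `φ'` shows that a kink satisfies
`φ' = -√(2 H(φ))`, so it is the inverse of the travel time `T(u) = ∫_c^u (2 H)^(-1/2)`, run
backwards. Since `h` is Lipschitz and vanishes at `0` and `b`, while `H(b) = 0`, one has
`2 H(s) ≤ L s²` and `2 H(s) ≤ L (b - s)²`; hence `T` diverges logarithmically at both ends and
is an increasing bijection from `(0, b)` onto `ℝ`. Its inverse `ψ` gives `φ(x) = ψ(-x)`, and
differentiating `φ' = -√(2 H(φ))` once more yields `φ'' = h(φ)`.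
-/

section Divergence

variable {F : ℝ → ℝ} {k : ℝ}

lemma tendsto_integral_nhdsGT_atTop {a c : ℝ} (hac : a < c) (hk : 0 < k)
    (hF : ContinuousOn F (Ioc a c)) (hle : ∀ s ∈ Ioc a c, k / (s - a) ≤ F s) :
    Tendsto (fun u => ∫ s in u..c, F s) (𝓝[>] a) atTop := by
  have hbound : ∀ u ∈ Ioo a c, k * Real.log ((c - a) / (u - a)) ≤ ∫ s in u..c, F s := by
    intro u hu
    have hsub : Icc u c ⊆ Ioc a c := Icc_subset_Ioc_iff hu.2.le |>.2 ⟨hu.1, le_rfl⟩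
    have hpos : (0 : ℝ) ∉ uIcc (u - a) (c - a) := by
      rw [uIcc_of_le (by linarith [hu.2])]; exact fun h => (sub_pos.2 hu.1).not_ge h.1
    calc k * Real.log ((c - a) / (u - a)) = ∫ s in u..c, k * (s - a)⁻¹ := by
          rw [integral_comp_sub_right (fun s => k * s⁻¹), integral_const_mul, integral_inv hpos]
      _ ≤ ∫ s in u..c, F s := by
          refine integral_mono_on hu.2.le ?_ ((hF.mono hsub).intervalIntegrable_of_Icc hu.2.le)
            fun s hs => hle s (hsub hs)
          refine ContinuousOn.intervalIntegrable_of_Icc hu.2.le ?_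
          exact continuousOn_const.mul <| (continuousOn_id.sub continuousOn_const).inv₀
            fun s hs => (sub_pos.2 (hsub hs).1).ne'
  have hshift : Tendsto (fun u => u - a) (𝓝[>] a) (𝓝[>] 0) := by
    refine tendsto_nhdsWithin_iff.2
      ⟨?_, eventually_nhdsWithin_of_forall fun u hu => mem_Ioi.2 (sub_pos.2 hu)⟩
    simpa using (continuous_sub_right a).continuousWithinAt (s := Ioi a) (x := a) |>.tendsto
  have hlog : Tendsto (fun u => k * Real.log ((c - a) / (u - a))) (𝓝[>] a) atTop := by
    simp_rw [div_eq_mul_inv (c - a)]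
    exact (Real.tendsto_log_atTop.comp
      ((tendsto_inv_nhdsGT_zero.comp hshift).const_mul_atTop (sub_pos.2 hac))).const_mul_atTop hk
  exact tendsto_atTop_mono' _ (eventually_of_mem (Ioo_mem_nhdsGT hac) hbound) hlog

lemma tendsto_integral_nhdsLT_atTop {b c : ℝ} (hcb : c < b) (hk : 0 < k)
    (hF : ContinuousOn F (Ico c b)) (hle : ∀ s ∈ Ico c b, k / (b - s) ≤ F s) :
    Tendsto (fun u => ∫ s in c..u, F s) (𝓝[<] b) atTop := by
  have hneg : Tendsto (fun u => -u) (𝓝[<] b) (𝓝[>] (-b)) := by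
    refine tendsto_nhdsWithin_iff.2
      ⟨?_, eventually_nhdsWithin_of_forall fun u hu => mem_Ioi.2 (neg_lt_neg hu)⟩
    exact (continuous_neg.tendsto b).mono_left nhdsWithin_le_nhds
  have hreflect := tendsto_integral_nhdsGT_atTop (F := fun s => F (-s)) (neg_lt_neg hcb) hk
    (hF.comp continuousOn_neg fun s hs => ⟨le_neg.1 hs.2, neg_lt.1 hs.1⟩)
    fun s hs => by simpa [sub_eq_add_neg, add_comm] using hle (-s) ⟨le_neg.1 hs.2, neg_lt.1 hs.1⟩
  refine (hreflect.comp hneg).congr fun u => ?_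
  simp [integral_comp_neg]

end Divergence

section Primitive

variable {h : ℝ → ℝ} {a b s : ℝ} {L : NNReal}

lemma LipschitzOnWith.two_mul_integral_le_sq_sub_left (hL : LipschitzOnWith L h (Icc a b))
    (ha : h a = 0) (hs : s ∈ Icc a b) : 2 * ∫ r in a..s, h r ≤ L * (s - a) ^ 2 := by
  have hle : ∀ r ∈ Icc a s, h r ≤ L * (r - a) := fun r hr => by
    have := hL.dist_le_mul r ⟨hr.1, hr.2.trans hs.2⟩ a ⟨le_rfl, hs.1.trans hs.2⟩
    rw [ha, Real.dist_eq, Real.dist_eq, sub_zero, abs_of_nonneg (sub_nonneg.2 hr.1)] at this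
    exact (le_abs_self _).trans this
  have hbound_int : ∫ r in a..s, (L : ℝ) * (r - a) = L * (s - a) ^ 2 / 2 := by
    rw [integral_comp_sub_right (fun r => (L : ℝ) * r), integral_const_mul, integral_id]
    ring
  have := integral_mono_on hs.1
    ((hL.continuousOn.mono (Icc_subset_Icc_right hs.2)).intervalIntegrable_of_Icc hs.1)
    ((by fun_prop : Continuous fun r => (L : ℝ) * (r - a)).intervalIntegrable
      (μ := MeasureTheory.volume) _ _) hle
  linarith

lemma LipschitzOnWith.two_mul_integral_le_sq_sub_right (hL : LipschitzOnWith L h (Icc a b))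
    (hb : h b = 0) (hint : ∫ r in a..b, h r = 0) (hs : s ∈ Icc a b) :
    2 * ∫ r in a..s, h r ≤ L * (b - s) ^ 2 := by
  have hle : ∀ r ∈ Icc s b, -(L * (b - r)) ≤ h r := fun r hr => by
    have := hL.dist_le_mul r ⟨hs.1.trans hr.1, hr.2⟩ b ⟨hs.1.trans hs.2, le_rfl⟩
    rw [hb, Real.dist_eq, Real.dist_eq, sub_zero, abs_sub_comm,
      abs_of_nonneg (sub_nonneg.2 hr.2)] at this
    exact (neg_le_neg this).trans (neg_abs_le _)
  have hbound_int : ∫ r in s..b, -((L : ℝ) * (b - r)) = -(L * (b - s) ^ 2 / 2) := by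
    rw [integral_neg, integral_comp_sub_left (fun r => (L : ℝ) * r), integral_const_mul,
      integral_id]
    ring
  have hcont := hL.continuousOn
  have hsplit := integral_add_adjacent_intervals (μ := MeasureTheory.volume)
    ((hcont.mono (Icc_subset_Icc_right hs.2)).intervalIntegrable_of_Icc hs.1)
    ((hcont.mono (Icc_subset_Icc_left hs.1)).intervalIntegrable_of_Icc hs.2)
  have := integral_mono_on hs.2
    ((by fun_prop : Continuous fun r => -((L : ℝ) * (b - r))).intervalIntegrable
      (μ := MeasureTheory.volume) _ _)
    ((hcont.mono (Icc_subset_Icc_left hs.1)).intervalIntegrable_of_Icc hs.2) hle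
  linarith

end Primitive

lemma inv_sqrt_div_le_inv_sqrt {v C d : ℝ} (hv : 0 < v) (hd : 0 < d) (h : v ≤ C * d ^ 2) :
    (√C)⁻¹ / d ≤ (√v)⁻¹ := by
  have hsqrt : √v ≤ √C * d := by
    simpa [Real.sqrt_mul' C (sq_nonneg d), Real.sqrt_sq hd.le] using Real.sqrt_le_sqrt h
  rw [div_eq_mul_inv, ← mul_inv]
  exact inv_anti₀ (Real.sqrt_pos.2 hv) hsqrt

lemma contDiff_two_of_hasDerivAt {φ φ' φ'' : ℝ → ℝ} (h₁ : ∀ x, HasDerivAt φ (φ' x) x)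
    (h₂ : ∀ x, HasDerivAt φ' (φ'' x) x) (h₃ : Continuous φ'') : ContDiff ℝ 2 φ := by
  have hd₁ : deriv φ = φ' := funext fun x => (h₁ x).deriv
  have hd₂ : deriv φ' = φ'' := funext fun x => (h₂ x).deriv
  rw [show (2 : WithTop ℕ∞) = 1 + 1 from rfl, contDiff_succ_iff_deriv, hd₁,
    contDiff_one_iff_deriv, hd₂]
  exact ⟨fun x => (h₁ x).differentiableAt, by simp, fun x => (h₂ x).differentiableAt, h₃⟩

lemma exists_strictMono_inverse {T T' : ℝ → ℝ} {a b : ℝ} (hab : a < b)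
    (hT : ∀ u ∈ Ioo a b, HasDerivAt T (T' u) u) (hT' : ∀ u ∈ Ioo a b, 0 < T' u)
    (hbot : Tendsto T (𝓝[>] a) atBot) (htop : Tendsto T (𝓝[<] b) atTop) :
    ∃ ψ : ℝ → ℝ, (∀ y, ψ y ∈ Ioo a b) ∧ StrictMono ψ ∧ (∀ y, HasDerivAt ψ (T' (ψ y))⁻¹ y) ∧
      Tendsto ψ atBot (𝓝 a) ∧ Tendsto ψ atTop (𝓝 b) := by
  have hcont : ContinuousOn T (Ioo a b) := fun u hu => (hT u hu).continuousAt.continuousWithinAt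
  have hmono : StrictMonoOn T (Ioo a b) :=
    strictMonoOn_of_deriv_pos (convex_Ioo a b) hcont fun u hu => by
      rw [interior_Ioo] at hu
      exact (hT u hu).deriv ▸ hT' u hu
  have hsurj : Function.Surjective fun u : Ioo a b => T u :=
    surjOn_iff_surjective.1 <| hcont.surjOn_of_tendsto (nonempty_Ioo.2 hab)
      ((tendsto_comp_coe_Ioo_atBot hab).2 hbot) ((tendsto_comp_coe_Ioo_atTop hab).2 htop)
  let e := StrictMono.orderIsoOfSurjective (fun u : Ioo a b => T u)
    (fun u v huv => hmono u.2 v.2 huv) hsurj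
  let ψ : ℝ → ℝ := fun y => e.symm y
  have hψmem : ∀ y, ψ y ∈ Ioo a b := fun y => (e.symm y).2
  have hψmono : StrictMono ψ := Subtype.strictMono_coe _ |>.comp e.symm.strictMono
  have hTψ : ∀ y, T (ψ y) = y := e.apply_symm_apply
  have hrange : range ψ = Ioo a b := by
    rw [show ψ = Subtype.val ∘ e.symm from rfl, e.symm.surjective.range_comp, Subtype.range_coe]
  refine ⟨ψ, hψmem, hψmono, fun y => ?_, tendsto_atBot_isGLB hψmono.monotone ?_,
    tendsto_atTop_isLUB hψmono.monotone ?_⟩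
  · exact (hT _ (hψmem y)).of_local_left_inverse
      (continuous_subtype_val.comp e.symm.continuous).continuousAt (hT' _ (hψmem y)).ne'
      (Eventually.of_forall hTψ)
  · exact hrange ▸ isGLB_Ioo hab
  · exact hrange ▸ isLUB_Ioo hab

section Quadrature

variable {V : ℝ → ℝ} {a b c C : ℝ}

noncomputable def travelTime (V : ℝ → ℝ) (c u : ℝ) : ℝ := ∫ s in c..u, (√(2 * V s))⁻¹

lemma continuousOn_inv_sqrt_two_mul (hV : ContinuousOn V (Ioo a b))
    (hVpos : ∀ s ∈ Ioo a b, 0 < V s) : ContinuousOn (fun s => (√(2 * V s))⁻¹) (Ioo a b) :=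
  ContinuousOn.inv₀ (by fun_prop) fun s hs => (Real.sqrt_pos.2 (by linarith [hVpos s hs])).ne'

lemma hasDerivAt_travelTime (hV : ContinuousOn V (Ioo a b)) (hVpos : ∀ s ∈ Ioo a b, 0 < V s)
    (hc : c ∈ Ioo a b) {u : ℝ} (hu : u ∈ Ioo a b) :
    HasDerivAt (travelTime V c) (√(2 * V u))⁻¹ u := by
  have hF := continuousOn_inv_sqrt_two_mul hV hVpos
  exact integral_hasDerivAt_right
    ((hF.mono (ordConnected_Ioo.uIcc_subset hc hu)).intervalIntegrable)
    (hF.stronglyMeasurableAtFilter isOpen_Ioo u hu) (hF.continuousAt (isOpen_Ioo.mem_nhds hu))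

lemma tendsto_travelTime_nhdsGT (hV : ContinuousOn V (Ioo a b)) (hVpos : ∀ s ∈ Ioo a b, 0 < V s)
    (hc : c ∈ Ioo a b) (hC : 0 < C) (hVa : ∀ s ∈ Ioo a b, 2 * V s ≤ C * (s - a) ^ 2) :
    Tendsto (travelTime V c) (𝓝[>] a) atBot := by
  have hsub : Ioc a c ⊆ Ioo a b := Ioc_subset_Ioo_right hc.2
  have := tendsto_integral_nhdsGT_atTop hc.1 (inv_pos.2 (Real.sqrt_pos.2 hC))
    ((continuousOn_inv_sqrt_two_mul hV hVpos).mono hsub) fun s hs =>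
      inv_sqrt_div_le_inv_sqrt (by linarith [hVpos s (hsub hs)]) (sub_pos.2 hs.1) (hVa s (hsub hs))
  exact (tendsto_neg_atTop_atBot.comp this).congr fun u => (integral_symm _ _).symm

lemma tendsto_travelTime_nhdsLT (hV : ContinuousOn V (Ioo a b)) (hVpos : ∀ s ∈ Ioo a b, 0 < V s)
    (hc : c ∈ Ioo a b) (hC : 0 < C) (hVb : ∀ s ∈ Ioo a b, 2 * V s ≤ C * (b - s) ^ 2) :
    Tendsto (travelTime V c) (𝓝[<] b) atTop := by
  have hsub : Ico c b ⊆ Ioo a b := Ico_subset_Ioo_left hc.1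
  exact tendsto_integral_nhdsLT_atTop hc.2 (inv_pos.2 (Real.sqrt_pos.2 hC))
    ((continuousOn_inv_sqrt_two_mul hV hVpos).mono hsub) fun s hs =>
      inv_sqrt_div_le_inv_sqrt (by linarith [hVpos s (hsub hs)]) (sub_pos.2 hs.2) (hVb s (hsub hs))

end Quadrature

lemma hasDerivAt_neg_sqrt_two_mul_comp {V φ : ℝ → ℝ} {v x : ℝ}
    (hφ : HasDerivAt φ (-√(2 * V (φ x))) x) (hV : HasDerivAt V v (φ x)) (hpos : 0 < V (φ x)) :
    HasDerivAt (fun y => -√(2 * V (φ y))) v x := by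
  have hsqrt : 0 < √(2 * V (φ x)) := Real.sqrt_pos.2 (by linarith)
  refine (((hV.comp x hφ).const_mul 2).sqrt (by positivity)).neg.congr_deriv ?_
  simp only [Function.comp_apply]
  field_simp

theorem exists_heteroclinic_of_quadratic_bounds {V g : ℝ → ℝ} {a b C : ℝ} (hab : a < b)
    (hV : ∀ s ∈ Ioo a b, HasDerivAt V (g s) s) (hg : ContinuousOn g (Ioo a b))
    (hVpos : ∀ s ∈ Ioo a b, 0 < V s) (hVa : ∀ s ∈ Ioo a b, 2 * V s ≤ C * (s - a) ^ 2)
    (hVb : ∀ s ∈ Ioo a b, 2 * V s ≤ C * (b - s) ^ 2) :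
    ∃ φ : ℝ → ℝ, ContDiff ℝ 2 φ ∧ (∀ x, deriv (deriv φ) x = g (φ x)) ∧
      (∀ x, φ x ∈ Ioo a b) ∧ StrictAnti φ ∧ Tendsto φ atBot (𝓝 b) ∧ Tendsto φ atTop (𝓝 a) := by
  have hc : (a + b) / 2 ∈ Ioo a b := ⟨by linarith, by linarith⟩
  have hC : 0 < C := by nlinarith [hVpos _ hc, hVa _ hc, sq_nonneg ((a + b) / 2 - a)]
  have hVcont : ContinuousOn V (Ioo a b) := fun s hs => (hV s hs).continuousAt.continuousWithinAt
  obtain ⟨ψ, hψmem, hψmono, hψderiv, hψbot, hψtop⟩ := exists_strictMono_inverse hab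
    (fun u hu => hasDerivAt_travelTime hVcont hVpos hc hu)
    (fun u hu => inv_pos.2 (Real.sqrt_pos.2 (by linarith [hVpos u hu])))
    (tendsto_travelTime_nhdsGT hVcont hVpos hc hC hVa)
    (tendsto_travelTime_nhdsLT hVcont hVpos hc hC hVb)
  set φ : ℝ → ℝ := fun x => ψ (-x)
  have hφmem : ∀ x, φ x ∈ Ioo a b := fun x => hψmem (-x)
  have hφ : ∀ x, HasDerivAt φ (-√(2 * V (φ x))) x := fun x => by
    have := (hψderiv (-x)).comp x (hasDerivAt_neg x)
    rwa [inv_inv, mul_neg_one] at this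
  have hφ' : ∀ x, HasDerivAt (fun y => -√(2 * V (φ y))) (g (φ x)) x := fun x =>
    hasDerivAt_neg_sqrt_two_mul_comp (hφ x) (hV _ (hφmem x)) (hVpos _ (hφmem x))
  have hφcont : Continuous φ := continuous_iff_continuousAt.2 fun x => (hφ x).continuousAt
  refine ⟨φ, contDiff_two_of_hasDerivAt hφ hφ' (hg.comp_continuous hφcont hφmem), fun x => ?_,
    hφmem, hψmono.comp_strictAnti fun _ _ h => neg_lt_neg h, hψtop.comp tendsto_neg_atBot_atTop,
    hψbot.comp tendsto_neg_atTop_atBot⟩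
  rw [show deriv φ = _ from funext fun x => (hφ x).deriv]
  exact (hφ' x).deriv

theorem kink_profile_exists_general (ω₀ : ℝ)
    (f : ℝ → ℝ) (hf : ContDiff ℝ 1 f) (hf0 : f 0 = 0)
    (b : ℝ) (hb : 0 < b)
    (hhb : ω₀ * b - f b = 0)
    (hHb : (∫ r in (0:ℝ)..b, (ω₀ * r - f r)) = 0)
    (hHpos : ∀ s ∈ Set.Ioo (0:ℝ) b, 0 < ∫ r in (0:ℝ)..s, (ω₀ * r - f r)) :
    ∃ φK : ℝ → ℝ, ContDiff ℝ 2 φK ∧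
      (∀ x : ℝ, -(deriv (deriv φK) x) + ω₀ * φK x - f (φK x) = 0) ∧
      (∀ x : ℝ, 0 < φK x ∧ φK x < b) ∧
      StrictAnti φK ∧
      Tendsto φK atBot (nhds b) ∧
      Tendsto φK atTop (nhds 0) := by
  have hh : ContDiff ℝ 1 fun s => ω₀ * s - f s := (contDiff_const.mul contDiff_id).sub hf
  have hcont := hh.continuous
  obtain ⟨L, hL⟩ :=
    hh.contDiffOn.exists_lipschitzOnWith one_ne_zero (convex_Icc 0 b) isCompact_Icc
  obtain ⟨φ, hφ, hφeq, hφmem, hφanti, hφbot, hφtop⟩ :=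
    exists_heteroclinic_of_quadratic_bounds (V := fun s => ∫ r in (0:ℝ)..s, (ω₀ * r - f r))
      (C := L) hb (fun s _ => integral_hasDerivAt_right (hcont.intervalIntegrable _ _)
        (hcont.stronglyMeasurableAtFilter _ _) hcont.continuousAt) hcont.continuousOn hHpos
      (fun s hs => by
        simpa using hL.two_mul_integral_le_sq_sub_left (by simp [hf0]) (Ioo_subset_Icc_self hs))
      (fun s hs => hL.two_mul_integral_le_sq_sub_right hhb hHb (Ioo_subset_Icc_self hs))
  exact ⟨φ, hφ, fun x => by rw [hφeq]; ring, hφmem, hφanti, hφbot, hφtop⟩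

/-- Existence of the kink profile: let `ω₀ > 0` and `f : ℝ → ℝ` be `C¹` with `f(0) = 0`,
`f'(0) = 0`; set `h(s) = ω₀ s − f(s)` and `H(s) = ∫₀^s h`. If there is `b > 0` with
`h(b) = 0`, `h'(b) > 0`, `H(b) = 0` and `H > 0` on `(0, b)`, then there is a `C²` function
`φ_K : ℝ → ℝ` solving `−φ_K'' + ω₀ φ_K − f(φ_K) = 0` on `ℝ`, with `0 < φ_K < b`, strictly
decreasing, `φ_K(x) → b` as `x → −∞` and `φ_K(x) → 0` as `x → +∞`. -/
theorem kink_profile_exists (ω₀ : ℝ) (hω₀ : 0 < ω₀)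
    (f : ℝ → ℝ) (hf : ContDiff ℝ 1 f) (hf0 : f 0 = 0) (hf'0 : deriv f 0 = 0)
    (b : ℝ) (hb : 0 < b)
    (hhb : ω₀ * b - f b = 0)
    (hh'b : 0 < deriv (fun s : ℝ => ω₀ * s - f s) b)
    (hHb : (∫ r in (0:ℝ)..b, (ω₀ * r - f r)) = 0)
    (hHpos : ∀ s ∈ Set.Ioo (0:ℝ) b, 0 < ∫ r in (0:ℝ)..s, (ω₀ * r - f r)) :
    ∃ φK : ℝ → ℝ, ContDiff ℝ 2 φK ∧
      (∀ x : ℝ, -(deriv (deriv φK) x) + ω₀ * φK x - f (φK x) = 0) ∧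
      (∀ x : ℝ, 0 < φK x ∧ φK x < b) ∧
      StrictAnti φK ∧
      Tendsto φK atBot (nhds b) ∧
      Tendsto φK atTop (nhds 0) :=
  kink_profile_exists_general ω₀ f hf hf0 b hb hhb hHb hHpos
end

section
/- Uniqueness up to translation of the kink profile: let ω₀ > 0 and let f : ℝ → ℝ be continuously differentiable with f(0) = 0 and f'(0) = 0; set h(s) := ω₀·s − f(s) and H(s) := ∫₀^s h(r) dr, and assume there is b > 0 with h(b) = 0, h'(b) > 0, H(b) = 0, and H(s) > 0 for all s ∈ (0, b). If φ₁, φ₂ : ℝ → ℝ are twice continuously differentiable functions, each satisfying −φ'' + ω₀·φ − f(φ) = 0 on ℝ together with 0 < φ(x) < b for all x, φ(x) → b as x → −∞ and φ(x) → 0 as x → +∞, then there exists x₀ ∈ ℝ such that φ₂(x) = φ₁(x − x₀) for all x ∈ ℝ. -/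
/-!
Multiplying `φ'' = h(φ)` by `φ'` shows that the energy `φ'² / 2 - H(φ)` is constant. Letting
`x → +∞` makes it nonnegative; since `H(φ) > 0`, `φ'` never vanishes and is therefore negative
(Darboux), and a positive energy would keep `φ' ≤ -√(2E)`, so that `φ` could not converge. Hence
`φ' = -√(2 H(φ))`. Translating `φ₁` so that `φ₁(a) = φ₂(0)` (intermediate values between the two
limits), the two profiles then also have equal slopes at `0`, and uniqueness for the `C¹` planar
system `(φ, φ')' = (φ', h(φ))` identifies them.
-/

open Filter Set Topology

theorem ODE_solution_unique_univ_of_locallyLipschitz {E : Type*} [NormedAddCommGroup E]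
    [NormedSpace ℝ E] {v : E → E} (hv : LocallyLipschitz v) {γ η : ℝ → E}
    (hγ : ∀ t, HasDerivAt γ (v (γ t)) t) (hη : ∀ t, HasDerivAt η (v (η t)) t) {t₀ : ℝ}
    (h : γ t₀ = η t₀) : γ = η := by
  funext t
  obtain ⟨A, B, ht, ht₀⟩ : ∃ A B, t ∈ Ioo A B ∧ t₀ ∈ Ioo A B :=
    ⟨min t t₀ - 1, max t t₀ + 1, by grind⟩
  have hγc : Continuous γ := continuous_iff_continuousAt.2 fun t => (hγ t).continuousAt
  have hηc : Continuous η := continuous_iff_continuousAt.2 fun t => (hη t).continuousAt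
  set s := γ '' Icc A B ∪ η '' Icc A B
  obtain ⟨K, hK⟩ := hv.locallyLipschitzOn.exists_lipschitzOnWith_of_compact
    ((isCompact_Icc.image hγc).union (isCompact_Icc.image hηc) : IsCompact s)
  exact ODE_solution_unique_of_mem_Ioo (fun _ _ => hK) ht₀
    (fun t ht => ⟨hγ t, .inl ⟨t, Ioo_subset_Icc_self ht, rfl⟩⟩)
    (fun t ht => ⟨hη t, .inr ⟨t, Ioo_subset_Icc_self ht, rfl⟩⟩) h ht

theorem tendsto_atBot_of_hasDerivAt_le_neg {u u' : ℝ → ℝ} {m : ℝ} (hm : 0 < m)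
    (hu : ∀ x, HasDerivAt u (u' x) x) (hle : ∀ x, u' x ≤ -m) : Tendsto u atTop atBot := by
  have hanti : Antitone fun x => u x + m * x :=
    antitone_of_hasDerivAt_nonpos (f' := fun x => u' x + m * 1)
      (fun x => (hu x).add ((hasDerivAt_id x).const_mul m))
      fun x => show u' x + m * 1 ≤ 0 by linarith [hle x]
  have hlin : Tendsto (fun x => u 0 - m * x) atTop atBot :=
    tendsto_atBot_add_const_left _ _ (tendsto_neg_atTop_atBot.comp (tendsto_id.const_mul_atTop hm))
  refine tendsto_atBot_mono' _ ?_ hlin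
  filter_upwards [eventually_ge_atTop 0] with x hx
  linarith [hanti hx]

theorem hasDerivAt_neg_of_ne_zero_of_tendsto_atTop {u u' : ℝ → ℝ} {c : ℝ}
    (hu : ∀ x, HasDerivAt u (u' x) x) (hne : ∀ x, u' x ≠ 0) (hc : ∀ x, c < u x)
    (htop : Tendsto u atTop (𝓝 c)) : ∀ x, u' x < 0 := by
  -- Darboux: a derivative that never vanishes has constant sign
  refine (hasDerivWithinAt_forall_lt_or_forall_gt_of_forall_ne convex_univ
    (fun x _ => (hu x).hasDerivWithinAt) fun x _ => hne x).elim (fun h x => h x trivial) ?_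
  intro hpos
  have hmono := strictMono_of_hasDerivAt_pos hu fun x => hpos x trivial
  have hle : u 0 ≤ c :=
    ge_of_tendsto htop ((eventually_ge_atTop 0).mono fun x hx => hmono.monotone hx)
  exact absurd (hc 0) hle.not_gt

/-- `u'' = g(u)`, as a first-order system with the velocity `u'` carried explicitly. -/
def IsNewtonSolution (g u u' : ℝ → ℝ) : Prop :=
  ∀ x, HasDerivAt u (u' x) x ∧ HasDerivAt u' (g (u x)) x

namespace IsNewtonSolution

variable {g u u' w w' : ℝ → ℝ}

theorem of_contDiff {φ : ℝ → ℝ} (hφ : ContDiff ℝ 2 φ) (heq : ∀ x, deriv (deriv φ) x = g (φ x)) :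
    IsNewtonSolution g φ (deriv φ) := by
  have hφ' : ContDiff ℝ 1 (deriv φ) := hφ.iterate_deriv' 1 1
  exact fun x => ⟨(hφ.differentiable (by norm_num) x).hasDerivAt,
    heq x ▸ (hφ'.differentiable one_ne_zero x).hasDerivAt⟩

theorem comp_add_const (hu : IsNewtonSolution g u u') (a : ℝ) :
    IsNewtonSolution g (fun x => u (x + a)) (fun x => u' (x + a)) := fun x =>
  ⟨(hu (x + a)).1.comp_add_const x a, (hu (x + a)).2.comp_add_const x a⟩

theorem unique (hg : ContDiff ℝ 1 g) (hu : IsNewtonSolution g u u')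
    (hw : IsNewtonSolution g w w') {t₀ : ℝ} (h₀ : u t₀ = w t₀) (h₀' : u' t₀ = w' t₀) : u = w := by
  have hv : LocallyLipschitz fun p : ℝ × ℝ => (p.2, g p.1) :=
    (contDiff_snd.prodMk (hg.comp contDiff_fst)).locallyLipschitz
  have := ODE_solution_unique_univ_of_locallyLipschitz hv (γ := fun x => (u x, u' x))
    (η := fun x => (w x, w' x)) (fun x => (hu x).1.prodMk (hu x).2)
    (fun x => (hw x).1.prodMk (hw x).2) (t₀ := t₀) (Prod.ext h₀ h₀')
  exact funext fun x => congrArg Prod.fst (congrFun this x)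

theorem exists_energy_eq {G : ℝ → ℝ} (hG : ∀ s, HasDerivAt G (g s) s)
    (hu : IsNewtonSolution g u u') : ∃ E, ∀ x, u' x ^ 2 / 2 - G (u x) = E := by
  have hE : ∀ x, HasDerivAt (fun x => u' x ^ 2 / 2 - G (u x)) 0 x := fun x => by
    have := (((hu x).2.pow 2).div_const 2).sub ((hG (u x)).comp x (hu x).1)
    exact this.congr_deriv (by ring)
  exact ⟨_, fun x => is_const_of_deriv_eq_zero (fun x => (hE x).differentiableAt)
    (fun x => (hE x).deriv) x 0⟩

theorem eq_neg_sqrt_of_tendsto_atTop {G : ℝ → ℝ} {c : ℝ} (hG : ∀ s, HasDerivAt G (g s) s)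
    (hGc : G c = 0) (hu : IsNewtonSolution g u u') (hGpos : ∀ x, 0 < G (u x)) (hc : ∀ x, c < u x)
    (htop : Tendsto u atTop (𝓝 c)) : ∀ x, u' x = -√(2 * G (u x)) := by
  obtain ⟨E, hE⟩ := hu.exists_energy_eq hG
  have hsq : ∀ x, u' x ^ 2 = 2 * E + 2 * G (u x) := fun x => by linarith [hE x]
  have hGu : Tendsto (fun x => G (u x)) atTop (𝓝 0) :=
    hGc ▸ ((continuous_iff_continuousAt.2 fun s => (hG s).continuousAt).tendsto c).comp htop
  have hE0 : 0 ≤ E := by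
    have : Tendsto (fun x => u' x ^ 2 / 2) atTop (𝓝 E) := by
      simpa using (tendsto_const_nhds (x := E)).add hGu |>.congr fun x => by linarith [hE x]
    exact ge_of_tendsto' this fun x => by positivity
  have hneg : ∀ x, u' x < 0 := hasDerivAt_neg_of_ne_zero_of_tendsto_atTop (fun x => (hu x).1)
    (fun x h => by nlinarith [hsq x, hGpos x]) hc htop
  have hE_eq : E = 0 := by
    by_contra hE_ne
    -- with positive energy the speed stays above `√(2E)`, so `u` cannot converge
    have hm : 0 < √(2 * E) := Real.sqrt_pos.2 (by positivity)
    have hle : ∀ x, u' x ≤ -√(2 * E) := fun x => by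
      have := Real.sqrt_le_sqrt (show 2 * E ≤ u' x ^ 2 by linarith [hsq x, hGpos x])
      rw [Real.sqrt_sq_eq_abs, abs_of_neg (hneg x)] at this
      linarith
    exact not_tendsto_nhds_of_tendsto_atBot
      (tendsto_atBot_of_hasDerivAt_le_neg hm (fun x => (hu x).1) hle) c htop
  intro x
  rw [show 2 * G (u x) = u' x ^ 2 by linarith [hsq x], Real.sqrt_sq_eq_abs, abs_of_neg (hneg x),
    neg_neg]

end IsNewtonSolution

theorem kink_profile_unique_up_to_translation_general (ω₀ : ℝ)
    (f : ℝ → ℝ) (hf : ContDiff ℝ 1 f)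
    (b : ℝ)
    (hHpos : ∀ s ∈ Set.Ioo (0:ℝ) b, 0 < ∫ r in (0:ℝ)..s, (ω₀ * r - f r))
    (φ₁ φ₂ : ℝ → ℝ)
    (hφ₁ : ContDiff ℝ 2 φ₁) (hφ₂ : ContDiff ℝ 2 φ₂)
    (heq₁ : ∀ x : ℝ, -(deriv (deriv φ₁) x) + ω₀ * φ₁ x - f (φ₁ x) = 0)
    (heq₂ : ∀ x : ℝ, -(deriv (deriv φ₂) x) + ω₀ * φ₂ x - f (φ₂ x) = 0)
    (hrange₁ : ∀ x : ℝ, 0 < φ₁ x ∧ φ₁ x < b)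
    (hrange₂ : ∀ x : ℝ, 0 < φ₂ x ∧ φ₂ x < b)
    (hbot₁ : Tendsto φ₁ atBot (nhds b)) (htop₁ : Tendsto φ₁ atTop (nhds 0))
    (htop₂ : Tendsto φ₂ atTop (nhds 0)) :
    ∃ x₀ : ℝ, ∀ x : ℝ, φ₂ x = φ₁ (x - x₀) := by
  have hg : ContDiff ℝ 1 fun s => ω₀ * s - f s := (contDiff_const.mul contDiff_id).sub hf
  have hG (s : ℝ) : HasDerivAt (fun s => ∫ r in (0:ℝ)..s, (ω₀ * r - f r)) (ω₀ * s - f s) s :=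
    (hg.continuous.integral_hasStrictDerivAt 0 s).hasDerivAt
  have hsol₁ : IsNewtonSolution (fun s => ω₀ * s - f s) φ₁ (deriv φ₁) :=
    .of_contDiff hφ₁ fun x => by linarith [heq₁ x]
  have hsol₂ : IsNewtonSolution (fun s => ω₀ * s - f s) φ₂ (deriv φ₂) :=
    .of_contDiff hφ₂ fun x => by linarith [heq₂ x]
  have hd₁ := hsol₁.eq_neg_sqrt_of_tendsto_atTop hG intervalIntegral.integral_same
    (fun x => hHpos _ (hrange₁ x)) (fun x => (hrange₁ x).1) htop₁
  have hd₂ := hsol₂.eq_neg_sqrt_of_tendsto_atTop hG intervalIntegral.integral_same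
    (fun x => hHpos _ (hrange₂ x)) (fun x => (hrange₂ x).1) htop₂
  obtain ⟨a, ha⟩ : φ₂ 0 ∈ range φ₁ := mem_range_of_exists_le_of_exists_ge hφ₁.continuous
    ((htop₁.eventually_lt_const (hrange₂ 0).1).exists.imp fun _ => le_of_lt)
    ((hbot₁.eventually_const_lt (hrange₂ 0).2).exists.imp fun _ => le_of_lt)
  have hshift := (hsol₁.comp_add_const a).unique hg hsol₂ (t₀ := 0)
    (by rwa [zero_add]) (by rw [zero_add, hd₁, hd₂, ha])
  exact ⟨-a, fun x => by simpa using (congrFun hshift x).symm⟩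

/-- Uniqueness up to translation of the kink profile: under the kink assumption on
`h(s) = ω₀ s − f(s)` (there is `b > 0` with `h(b) = 0`, `h'(b) > 0`, `∫₀^b h = 0` and
`∫₀^s h > 0` on `(0,b)`), any two `C²` solutions of `−φ'' + ω₀ φ − f(φ) = 0` on `ℝ` with
`0 < φ < b`, `φ(x) → b` as `x → −∞` and `φ(x) → 0` as `x → +∞` coincide up to a
translation. -/
theorem kink_profile_unique_up_to_translation (ω₀ : ℝ) (hω₀ : 0 < ω₀)
    (f : ℝ → ℝ) (hf : ContDiff ℝ 1 f) (hf0 : f 0 = 0) (hf'0 : deriv f 0 = 0)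
    (b : ℝ) (hb : 0 < b)
    (hhb : ω₀ * b - f b = 0)
    (hh'b : 0 < deriv (fun s : ℝ => ω₀ * s - f s) b)
    (hHb : (∫ r in (0:ℝ)..b, (ω₀ * r - f r)) = 0)
    (hHpos : ∀ s ∈ Set.Ioo (0:ℝ) b, 0 < ∫ r in (0:ℝ)..s, (ω₀ * r - f r))
    (φ₁ φ₂ : ℝ → ℝ)
    (hφ₁ : ContDiff ℝ 2 φ₁) (hφ₂ : ContDiff ℝ 2 φ₂)
    (heq₁ : ∀ x : ℝ, -(deriv (deriv φ₁) x) + ω₀ * φ₁ x - f (φ₁ x) = 0)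
    (heq₂ : ∀ x : ℝ, -(deriv (deriv φ₂) x) + ω₀ * φ₂ x - f (φ₂ x) = 0)
    (hrange₁ : ∀ x : ℝ, 0 < φ₁ x ∧ φ₁ x < b)
    (hrange₂ : ∀ x : ℝ, 0 < φ₂ x ∧ φ₂ x < b)
    (hbot₁ : Tendsto φ₁ atBot (nhds b)) (htop₁ : Tendsto φ₁ atTop (nhds 0))
    (hbot₂ : Tendsto φ₂ atBot (nhds b)) (htop₂ : Tendsto φ₂ atTop (nhds 0)) :
    ∃ x₀ : ℝ, ∀ x : ℝ, φ₂ x = φ₁ (x - x₀) :=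
  kink_profile_unique_up_to_translation_general ω₀ f hf b hHpos φ₁ φ₂ hφ₁ hφ₂ heq₁ heq₂ hrange₁
    hrange₂ hbot₁ htop₁ htop₂
end
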